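/- Let G be a communication graph and let H be its dependency graph, obtained by reversing all process arcs and making all communication arcs bidirectional. If H is acyclic, then no colouring sequence on G deadlocks (with zero tokens): every maximal colouring sequence completes. -/

import Mathlib

/-! Formal framework: communication graphs and the red/yellow/green colouring game
(Brodsky–Pedersen–Wagner, "On the Complexity of Buffer Allocation in Message Passing Systems"),
with receive-side token pools. -/

inductive Colour : Type
  | red | yellow | green
deriving DecidableEq

/-- A communication graph: vertices are partitioned into start/send/receive/end vertices,
`pred u v` means `u` is the component predecessor of `v` (a process arc `u → v`),
`matched u v` is a communication arc from send `u` to its matching receive `v`,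
`comp v` is the index of the process component of `v`, and `pos v` is the position
of `v` within its component chain. -/
structure CommGraph (V : Type) where
  isStart : V → Prop
  isSend : V → Prop
  isRecv : V → Prop
  isEnd : V → Prop
  pred : V → V → Prop
  matched : V → V → Prop
  comp : V → ℕ
  pos : V → ℕ

namespace CommGraph

variable {V : Type}

/-- An arc of the communication graph (process arc or communication arc). -/
def GArc (G : CommGraph V) (u v : V) : Prop := G.pred u v ∨ G.matched u v

/-- Well-formedness of a communication graph: the vertex kinds partition `V`,
components are chains (unique predecessors, positions increase along process arcs),
communication arcs go from sends to receives in different components and form a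
partial matching, and the graph is acyclic (arcs admit no infinite descent). -/
structure WF (G : CommGraph V) : Prop where
  kinds : ∀ v, G.isStart v ∨ G.isSend v ∨ G.isRecv v ∨ G.isEnd v
  start_not_send : ∀ v, G.isStart v → ¬ G.isSend v
  start_not_recv : ∀ v, G.isStart v → ¬ G.isRecv v
  start_not_end : ∀ v, G.isStart v → ¬ G.isEnd v
  send_not_recv : ∀ v, G.isSend v → ¬ G.isRecv v
  send_not_end : ∀ v, G.isSend v → ¬ G.isEnd v
  recv_not_end : ∀ v, G.isRecv v → ¬ G.isEnd v
  pred_unique : ∀ {u u' v}, G.pred u v → G.pred u' v → u = u'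
  pred_comp : ∀ {u v}, G.pred u v → G.comp u = G.comp v
  pred_pos : ∀ {u v}, G.pred u v → G.pos v = G.pos u + 1
  start_no_pred : ∀ {u v}, G.pred u v → ¬ G.isStart v
  has_pred : ∀ v, ¬ G.isStart v → ∃ u, G.pred u v
  matched_send : ∀ {u v}, G.matched u v → G.isSend u
  matched_recv : ∀ {u v}, G.matched u v → G.isRecv v
  matched_comp : ∀ {u v}, G.matched u v → G.comp u ≠ G.comp v
  matched_unique_left : ∀ {u u' v}, G.matched u v → G.matched u' v → u = u'
  matched_unique_right : ∀ {u v v'}, G.matched u v → G.matched u v' → v = v'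
  send_has_match : ∀ v, G.isSend v → ∃ w, G.matched v w
  recv_has_match : ∀ v, G.isRecv v → ∃ w, G.matched w v
  dag : WellFounded fun u v => G.GArc u v

end CommGraph

/-- A state of the colouring game: the colouring, which receive vertices currently
hold a token on their incident communication arc, and the number of available
tokens in each (per-process, receive-side) pool. -/
structure St (V : Type) where
  col : V → Colour
  tok : V → Bool
  pool : ℕ → ℕ

/-- The names of the colouring rules. -/
inductive Rule : Type
  | sendYel | recvYel | recvYelTok | sendGrn | recvGrn | endYel | endGrn
deriving DecidableEq

variable {V : Type}

/-- One move of the colouring game (receive-side buffering: the token used by the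
buffered-receive rule `recvYelTok` comes from the pool of the receiving component,
and is returned when the receive turns green). -/
inductive Step [DecidableEq V] (G : CommGraph V) : Rule → St V → St V → Prop
  | sendYel {s : St V} {v u : V} :
      G.isSend v → s.col v = .red → G.pred u v → s.col u = .green →
      Step G .sendYel s ⟨Function.update s.col v .yellow, s.tok, s.pool⟩
  | recvYel {s : St V} {v u w : V} :
      G.isRecv v → s.col v = .red → G.matched w v → s.col w = .yellow →
      G.pred u v → s.col u = .green →
      Step G .recvYel s ⟨Function.update s.col v .yellow, s.tok, s.pool⟩
  | recvYelTok {s : St V} {v w : V} :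
      G.isRecv v → s.col v = .red → G.matched w v → s.col w = .yellow →
      0 < s.pool (G.comp v) →
      Step G .recvYelTok s ⟨Function.update s.col v .yellow,
        Function.update s.tok v true,
        Function.update s.pool (G.comp v) (s.pool (G.comp v) - 1)⟩
  | sendGrn {s : St V} {v r : V} :
      G.isSend v → s.col v = .yellow → G.matched v r → s.col r = .yellow →
      Step G .sendGrn s ⟨Function.update s.col v .green, s.tok, s.pool⟩
  | recvGrn {s : St V} {v u w : V} :
      G.isRecv v → s.col v = .yellow → G.pred u v → s.col u = .green →
      G.matched w v → s.col w = .green →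
      Step G .recvGrn s ⟨Function.update s.col v .green,
        Function.update s.tok v false,
        if s.tok v then
          Function.update s.pool (G.comp v) (s.pool (G.comp v) + 1)
        else s.pool⟩
  | endYel {s : St V} {v u : V} :
      G.isEnd v → s.col v = .red → G.pred u v → s.col u = .green →
      Step G .endYel s ⟨Function.update s.col v .yellow, s.tok, s.pool⟩
  | endGrn {s : St V} {v : V} :
      G.isEnd v → s.col v = .yellow →
      Step G .endGrn s ⟨Function.update s.col v .green, s.tok, s.pool⟩

/-- `IsSeq G s l` : the list `l` of (rule, state) pairs is a valid colouring sequence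
starting from state `s`. -/
def IsSeq [DecidableEq V] (G : CommGraph V) : St V → List (Rule × St V) → Prop
  | _, [] => True
  | s, p :: l => Step G p.1 s p.2 ∧ IsSeq G p.2 l

/-- The list of states visited by a colouring sequence. -/
def states (s0 : St V) (l : List (Rule × St V)) : List (St V) :=
  s0 :: l.map Prod.snd

/-- The final state of a colouring sequence. -/
def finalSt (s0 : St V) (l : List (Rule × St V)) : St V :=
  (states s0 l).getLast (by simp [states])

open Classical in
/-- The initial state: start vertices green, all others red, no tokens placed,
token pools given by the token assignment `B` (pool of component `i` holds `B i`). -/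
noncomputable def init (G : CommGraph V) (B : ℕ → ℕ) : St V :=
  ⟨fun v => if G.isStart v then Colour.green else Colour.red, fun _ => false, B⟩

/-- A state from which no colouring rule applies. -/
def MaximalFrom [DecidableEq V] (G : CommGraph V) (s : St V) : Prop :=
  ∀ ρ t, ¬ Step G ρ s t

/-- A state is complete when every vertex is green. -/
def Completes (s : St V) : Prop := ∀ v, s.col v = Colour.green

/-- A deadlocking colouring sequence from `s0`: a maximal sequence whose final
colouring has a non-green vertex. -/
def Deadlocks [DecidableEq V] (G : CommGraph V) (s0 : St V) (l : List (Rule × St V)) : Prop :=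
  IsSeq G s0 l ∧ MaximalFrom G (finalSt s0 l) ∧ ¬ Completes (finalSt s0 l)

/-- The system is safe (deadlock free) under token assignment `B`:
every maximal colouring sequence completes. -/
def DeadlockFree [DecidableEq V] (G : CommGraph V) (B : ℕ → ℕ) : Prop :=
  ∀ l, IsSeq G (init G B) l → MaximalFrom G (finalSt (init G B) l) →
    Completes (finalSt (init G B) l)

/-- A state blocks: some yellow send has a matching red receive to which the
buffered-receive rule cannot be applied (no token available). -/
def Blocked (G : CommGraph V) (s : St V) : Prop :=
  ∃ v r, G.matched v r ∧ s.col v = Colour.yellow ∧ s.col r = Colour.red ∧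
    s.pool (G.comp r) = 0

/-- The graph is block free under token assignment `B`: no colouring sequence blocks. -/
def BlockFree [DecidableEq V] (G : CommGraph V) (B : ℕ → ℕ) : Prop :=
  ∀ l, IsSeq G (init G B) l → ¬ Blocked G (finalSt (init G B) l)


/-- An edge of the dependency graph `H` of `G`: process arcs reversed,
communication arcs made bidirectional. -/
def HStep {V : Type} (G : CommGraph V) (u v : V) : Prop :=
  G.pred v u ∨ G.matched u v ∨ G.matched v u

/-- A cycle in the dependency graph: a nonempty periodic closed walk along `HStep`
edges that never immediately retraverses a communication arc in the opposite
direction (so the trivial back-and-forth over one bidirectional communication arc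
does not count as a cycle). -/
def DepCycle {V : Type} (G : CommGraph V) : Prop :=
  ∃ (k : ℕ) (c : ℕ → V), 0 < k ∧ (∀ i, c (i + k) = c i) ∧
    (∀ i, HStep G (c i) (c (i + 1))) ∧
    (∀ i, ¬ (c (i + 2) = c i ∧ (G.matched (c i) (c (i + 1)) ∨ G.matched (c (i + 1)) (c i))))

/-! With no tokens the buffered-receive rule never fires, and then every reachable colouring
is consistent: a non-red vertex has a green component predecessor, a receive leaves red only
after its send has, a send turns green only after its receive has left red, and a receive turns
green only after its send has. In a maximal state, a non-green vertex therefore waits either on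
its non-green component predecessor or, when that predecessor is green, across its
communication arc on a non-green partner whose own predecessor is non-green. Following these
waits inside the finite set of non-green vertices closes a cycle of the dependency graph, and
the cycle never immediately retraverses a communication arc, because a wait across a
communication arc is always followed by a wait along a process arc. -/

theorem exists_periodic_of_forall_exists {α : Type*} [Finite α] {P : α → Prop}
    {R : α → α → Prop} (h : ∀ x, P x → ∃ y, P y ∧ R x y) {x₀ : α} (hx₀ : P x₀) :
    ∃ (k : ℕ) (c : ℕ → α), 0 < k ∧ (∀ i, c (i + k) = c i) ∧ ∀ i, R (c i) (c (i + 1)) := by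
  choose! f hfP hfR using h
  have hP : ∀ n, P (f^[n] x₀) := fun n => Set.MapsTo.iterate hfP n hx₀
  obtain ⟨m, n, hmn, heq⟩ := Finite.exists_ne_map_eq_of_infinite fun n => f^[n] x₀
  wlog hlt : m < n generalizing m n
  · exact this n m hmn.symm heq.symm (hmn.lt_or_gt.resolve_left hlt)
  have hper : Function.IsPeriodicPt f (n - m) (f^[m] x₀) := by
    rw [Function.IsPeriodicPt, Function.IsFixedPt, ← Function.iterate_add_apply,
      Nat.sub_add_cancel hlt.le, heq]
  refine ⟨n - m, fun i => f^[i] (f^[m] x₀), by omega, fun i => ?_, fun i => ?_⟩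
  · dsimp only
    rw [add_comm, Function.iterate_add_apply, (hper.apply_iterate i).eq]
  · dsimp only
    rw [Function.iterate_succ_apply']
    exact hfR _ (by rw [← Function.iterate_add_apply]; exact hP _)

namespace CommGraph

variable {V : Type} {G : CommGraph V} {s t : St V}

structure ColourInv (G : CommGraph V) (c : V → Colour) : Prop where
  start_green : ∀ {v}, G.isStart v → c v = .green
  pred_green_of_ne_red : ∀ {u v}, G.pred u v → c v ≠ .red → c u = .green
  send_ne_red_of_recv_ne_red : ∀ {w v}, G.matched w v → c v ≠ .red → c w ≠ .red
  recv_ne_red_of_send_green : ∀ {v r}, G.matched v r → c v = .green → c r ≠ .red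
  send_green_of_recv_green : ∀ {w v}, G.matched w v → c v = .green → c w = .green

structure ZeroTokenInv (G : CommGraph V) (s : St V) : Prop where
  colourInv : G.ColourInv s.col
  pool_eq_zero : ∀ i, s.pool i = 0
  tok_eq_false : ∀ v, s.tok v = false

theorem zeroTokenInv_init (hwf : G.WF) : G.ZeroTokenInv (init G fun _ => 0) := by
  have hstart : ∀ {v}, (init G fun _ => 0).col v ≠ .red → G.isStart v := by
    intro v hv; by_contra h; simp [init, h] at hv
  have hgreen : ∀ {v}, (init G fun _ => 0).col v = .green → G.isStart v :=
    fun hv => hstart (by simp [hv])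
  refine ⟨⟨fun hv => by simp [init, hv], ?_, ?_, ?_, ?_⟩, fun _ => rfl, fun _ => rfl⟩
  · exact fun hu hv => absurd (hstart hv) (hwf.start_no_pred hu)
  · exact fun hw hv => absurd (hwf.matched_recv hw) (hwf.start_not_recv _ (hstart hv))
  · exact fun hr hv => absurd (hwf.matched_send hr) (hwf.start_not_send _ (hgreen hv))
  · exact fun hw hv => absurd (hwf.matched_recv hw) (hwf.start_not_recv _ (hgreen hv))

def WaitsOn (G : CommGraph V) (s : St V) (v u : V) : Prop :=
  G.pred u v ∨
    (∀ p, G.pred p v → s.col p = .green) ∧ (G.matched v u ∨ G.matched u v) ∧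
      ∃ p, G.pred p u ∧ s.col p ≠ .green

theorem WaitsOn.hStep {v u : V} (h : G.WaitsOn s v u) : HStep G v u :=
  h.imp_right fun h => h.2.1

theorem WaitsOn.not_comm_of_swap (hwf : G.WF) {v u : V} (hvu : G.WaitsOn s v u)
    (huv : G.WaitsOn s u v) : ¬ (G.matched v u ∨ G.matched u v) := by
  intro hcomm
  have hcomp : G.comp v ≠ G.comp u :=
    hcomm.elim hwf.matched_comp fun h => (hwf.matched_comp h).symm
  rcases hvu with hp | ⟨-, -, p, hp, hpg⟩
  · exact hcomp (hwf.pred_comp hp).symm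
  rcases huv with hp' | ⟨hgreen, -⟩
  · exact hcomp (hwf.pred_comp hp')
  · exact hpg (hgreen p hp)

section DecidableEq

variable [DecidableEq V] {c : V → Colour} {v : V}

theorem ColourInv.update_yellow (hc : G.ColourInv c) (hv : c v = .red)
    (hpred : ∀ u, G.pred u v → c u = .green) (hsend : ∀ w, G.matched w v → c w ≠ .red) :
    G.ColourInv (Function.update c v .yellow) := by
  obtain ⟨_, _, _, _, _⟩ := hc
  constructor <;> grind [Function.update_apply]

theorem ColourInv.update_green (hc : G.ColourInv c) (hv : c v = .yellow)
    (hrecv : ∀ r, G.matched v r → c r ≠ .red) (hsend : ∀ w, G.matched w v → c w = .green) :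
    G.ColourInv (Function.update c v .green) := by
  obtain ⟨_, _, _, _, _⟩ := hc
  constructor <;> grind [Function.update_apply]

theorem ZeroTokenInv.step (hwf : G.WF) (hs : G.ZeroTokenInv s) {ρ : Rule}
    (h : Step G ρ s t) : G.ZeroTokenInv t := by
  have hc := hs.colourInv
  cases h with
  | sendYel hv hred hu hug =>
    refine ⟨hc.update_yellow hred (fun u' hu' => hwf.pred_unique hu' hu ▸ hug) ?_,
      hs.pool_eq_zero, hs.tok_eq_false⟩
    exact fun w hw => absurd (hwf.matched_recv hw) (hwf.send_not_recv _ hv)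
  | recvYel hv hred hw hwy hu hug =>
    refine ⟨hc.update_yellow hred (fun u' hu' => hwf.pred_unique hu' hu ▸ hug) ?_,
      hs.pool_eq_zero, hs.tok_eq_false⟩
    exact fun w' hw' => hwf.matched_unique_left hw' hw ▸ by simp [hwy]
  | recvYelTok _ _ _ _ hpool => simp [hs.pool_eq_zero] at hpool
  | sendGrn hv hyel hr hry =>
    refine ⟨hc.update_green hyel ?_ ?_, hs.pool_eq_zero, hs.tok_eq_false⟩
    · exact fun r' hr' => hwf.matched_unique_right hr hr' ▸ by simp [hry]
    · exact fun w hw => absurd (hwf.matched_recv hw) (hwf.send_not_recv _ hv)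
  | recvGrn hv hyel hu hug hw hwg =>
    refine ⟨hc.update_green hyel ?_ ?_, ?_, ?_⟩
    · exact fun r hr => absurd hv (hwf.send_not_recv _ (hwf.matched_send hr))
    · exact fun w' hw' => hwf.matched_unique_left hw' hw ▸ hwg
    · simp [hs.tok_eq_false, hs.pool_eq_zero]
    · intro x; simp [Function.update_apply, hs.tok_eq_false]
  | endYel hv hred hu hug =>
    refine ⟨hc.update_yellow hred (fun u' hu' => hwf.pred_unique hu' hu ▸ hug) ?_,
      hs.pool_eq_zero, hs.tok_eq_false⟩
    exact fun w hw => absurd hv (hwf.recv_not_end _ (hwf.matched_recv hw))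
  | endGrn hv hyel =>
    refine ⟨hc.update_green hyel ?_ ?_, hs.pool_eq_zero, hs.tok_eq_false⟩
    · exact fun r hr => absurd hv (hwf.send_not_end _ (hwf.matched_send hr))
    · exact fun w hw => absurd hv (hwf.recv_not_end _ (hwf.matched_recv hw))

end DecidableEq

end CommGraph

section Game

variable {V : Type} [DecidableEq V] {G : CommGraph V} {s : St V}

theorem IsSeq.finalSt_of_invariant {I : St V → Prop}
    (hI : ∀ ρ s t, I s → Step G ρ s t → I t) :
    ∀ {s : St V} {l : List (Rule × St V)}, I s → IsSeq G s l → I (finalSt s l)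
  | _, [], hs, _ => hs
  | _, p :: l, hs, ⟨hstep, hl⟩ => by
    simp only [finalSt, states, List.map_cons]
    rw [List.getLast_cons (by simp)]
    exact IsSeq.finalSt_of_invariant hI (hI _ _ _ hs hstep) hl

theorem MaximalFrom.exists_partner_of_send (hmax : MaximalFrom G s) (hwf : G.WF)
    (hc : G.ColourInv s.col) {v : V} (hsd : G.isSend v) (hv : s.col v ≠ .green)
    (hpred : ∀ p, G.pred p v → s.col p = .green) :
    ∃ r, G.matched v r ∧ s.col r ≠ .green ∧ ∃ p, G.pred p r ∧ s.col p ≠ .green := by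
  obtain ⟨u, hu⟩ := hwf.has_pred v (hwf.start_not_send v · hsd)
  obtain ⟨r, hm⟩ := hwf.send_has_match v hsd
  have hrc := hwf.matched_recv hm
  obtain ⟨p, hp⟩ := hwf.has_pred r (hwf.start_not_recv r · hrc)
  cases hcv : s.col v with
  | green => exact absurd hcv hv
  | red => exact (hmax _ _ (.sendYel hsd hcv hu (hpred u hu))).elim
  | yellow =>
    cases hcr : s.col r with
    | red =>
      exact ⟨r, hm, by simp [hcr], p, hp, fun hpg => hmax _ _ (.recvYel hrc hcr hm hcv hp hpg)⟩
    | yellow => exact (hmax _ _ (.sendGrn hsd hcv hm hcr)).elim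
    | green => exact absurd (hc.send_green_of_recv_green hm hcr) hv

theorem MaximalFrom.exists_partner_of_recv (hmax : MaximalFrom G s) (hwf : G.WF)
    (hc : G.ColourInv s.col) {v : V} (hrc : G.isRecv v) (hv : s.col v ≠ .green)
    (hpred : ∀ p, G.pred p v → s.col p = .green) :
    ∃ w, G.matched w v ∧ s.col w ≠ .green ∧ ∃ p, G.pred p w ∧ s.col p ≠ .green := by
  obtain ⟨u, hu⟩ := hwf.has_pred v (hwf.start_not_recv v · hrc)
  obtain ⟨w, hm⟩ := hwf.recv_has_match v hrc
  have hsd := hwf.matched_send hm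
  obtain ⟨p, hp⟩ := hwf.has_pred w (hwf.start_not_send w · hsd)
  cases hcv : s.col v with
  | green => exact absurd hcv hv
  | red =>
    cases hcw : s.col w with
    | red => exact ⟨w, hm, by simp [hcw], p, hp, fun hpg => hmax _ _ (.sendYel hsd hcw hp hpg)⟩
    | yellow => exact (hmax _ _ (.recvYel hrc hcv hm hcw hu (hpred u hu))).elim
    | green => exact absurd hcv (hc.recv_ne_red_of_send_green hm hcw)
  | yellow =>
    cases hcw : s.col w with
    | red => exact absurd hcw (hc.send_ne_red_of_recv_ne_red hm (by simp [hcv]))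
    | yellow => exact (hmax _ _ (.sendGrn hsd hcw hm hcv)).elim
    | green => exact (hmax _ _ (.recvGrn hrc hcv hu (hpred u hu) hm hcw)).elim

theorem MaximalFrom.green_of_end (hmax : MaximalFrom G s) (hwf : G.WF) {v : V}
    (hed : G.isEnd v) (hpred : ∀ p, G.pred p v → s.col p = .green) : s.col v = .green := by
  obtain ⟨u, hu⟩ := hwf.has_pred v (hwf.start_not_end v · hed)
  cases hcv : s.col v with
  | green => rfl
  | red => exact (hmax _ _ (.endYel hed hcv hu (hpred u hu))).elim
  | yellow => exact (hmax _ _ (.endGrn hed hcv)).elim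

theorem MaximalFrom.exists_waitsOn (hmax : MaximalFrom G s) (hwf : G.WF)
    (hc : G.ColourInv s.col) {v : V} (hv : s.col v ≠ .green) :
    ∃ u, s.col u ≠ .green ∧ G.WaitsOn s v u := by
  by_cases hpred : ∀ p, G.pred p v → s.col p = .green
  · rcases hwf.kinds v with hst | hsd | hrc | hed
    · exact absurd (hc.start_green hst) hv
    · obtain ⟨r, hm, hr, hrp⟩ := hmax.exists_partner_of_send hwf hc hsd hv hpred
      exact ⟨r, hr, .inr ⟨hpred, .inl hm, hrp⟩⟩
    · obtain ⟨w, hm, hw, hwp⟩ := hmax.exists_partner_of_recv hwf hc hrc hv hpred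
      exact ⟨w, hw, .inr ⟨hpred, .inr hm, hwp⟩⟩
    · exact absurd (hmax.green_of_end hwf hed hpred) hv
  · push Not at hpred
    obtain ⟨p, hp, hpg⟩ := hpred
    exact ⟨p, hpg, .inl hp⟩

end Game

/-- **Lemma.** If `G` is a communication graph whose dependency graph is acyclic,
then no colouring sequence on `G` deadlocks (with zero tokens): every maximal
colouring sequence completes. -/
theorem acyclic_dependency_no_deadlock {V : Type} [DecidableEq V] [Fintype V]
    (G : CommGraph V) (hwf : G.WF) (hacyc : ¬ DepCycle G) :
    ∀ l, IsSeq G (init G fun _ => 0) l →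
      MaximalFrom G (finalSt (init G fun _ => 0) l) →
      Completes (finalSt (init G fun _ => 0) l) := by
  intro l hseq hmax v
  by_contra hv
  have hinv : G.ZeroTokenInv (finalSt _ l) :=
    hseq.finalSt_of_invariant (fun _ _ _ hs h => hs.step hwf h) (CommGraph.zeroTokenInv_init hwf)
  obtain ⟨k, c, hk, hper, hwait⟩ := exists_periodic_of_forall_exists
    (fun _ hv => hmax.exists_waitsOn hwf hinv.colourInv hv) hv
  refine hacyc ⟨k, c, hk, hper, fun i => (hwait i).hStep, fun i ⟨hback, hcomm⟩ => ?_⟩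
  exact (hwait i).not_comm_of_swap hwf (hback ▸ hwait (i + 1)) hcomm
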